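/- arXiv:1804.10740 — 6 statements merged into one kernel-verified Lean document; each statement's English description precedes it below -/
import Mathlib

section
/- Let s ≥ 1 be a natural number dividing W. Then for every x ∈ U and all indices i ≤ j ≤ W, the rounded-window frequencies sandwich the interval frequency: f_x^j + f_x^{s·⌊i/s⌋} ≤ f_x^{s·⌈j/s⌉} + f_x^i, and f_x^{s·⌈j/s⌉} + f_x^i ≤ f_x^j + f_x^{s·⌊i/s⌋} + 2s. (Equivalently, f_x^{s·⌈j/s⌉} − f_x^{s·⌊i/s⌋} − 2s ≤ f_x^{i,j} ≤ f_x^{s·⌈j/s⌉} − f_x^{s·⌊i/s⌋}.) -/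
/-- The `w`-frequency of `x`: the number of occurrences of `x` among the last `w`
elements of the stream `S`. -/
def freq {U : Type*} [DecidableEq U] (S : List U) (x : U) (w : ℕ) : ℕ :=
  (S.drop (S.length - w)).count x

/-!
The window frequency `w ↦ f_x^w` is monotone and grows by at most one per unit of `w`.
Rounding `j` up and `i` down to multiples of `s` moves each endpoint by less than `s` in the
direction that enlarges the interval, so the interval count can only grow, and by at most `2s`.
-/

namespace Nat

lemma le_mul_ceilDiv {s : ℕ} (hs : 0 < s) (j : ℕ) : j ≤ s * (j ⌈/⌉ s) :=
  (ceilDiv_le_iff_le_mul hs).1 le_rfl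

lemma mul_ceilDiv_le_add (j s : ℕ) : s * (j ⌈/⌉ s) ≤ j + s := by
  rw [ceilDiv_eq_add_pred_div]
  have := Nat.mul_div_le (j + s - 1) s
  omega

lemma le_mul_div_add {s : ℕ} (hs : 0 < s) (i : ℕ) : i ≤ s * (i / s) + s := by
  have := Nat.lt_mul_div_succ i hs
  rw [Nat.mul_succ] at this
  omega

end Nat

section Freq

variable {U : Type*} [DecidableEq U] (S : List U) (x : U)

lemma freq_eq_count_take_reverse (w : ℕ) : freq S x w = (S.reverse.take w).count x := by
  rw [← List.count_reverse, List.reverse_take, List.length_reverse, List.reverse_reverse, freq]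

lemma freq_add (w d : ℕ) :
    freq S x (w + d) = freq S x w + ((S.reverse.drop w).take d).count x := by
  simp only [freq_eq_count_take_reverse, List.take_add, List.count_append]

lemma freq_monotone : Monotone (freq S x) := by
  intro w w' h
  obtain ⟨d, rfl⟩ := Nat.exists_eq_add_of_le h
  rw [freq_add]
  exact Nat.le_add_right _ _

lemma freq_le_freq_add_sub (w w' : ℕ) : freq S x w' ≤ freq S x w + (w' - w) := by
  rcases le_total w' w with h | h
  · exact (freq_monotone S x h).trans (Nat.le_add_right _ _)
  · obtain ⟨d, rfl⟩ := Nat.exists_eq_add_of_le h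
    rw [freq_add, Nat.add_sub_cancel_left]
    exact Nat.add_le_add_left (List.count_le_length.trans (List.length_take_le _ _)) _

end Freq

theorem freq_rounded_sandwich_general {U : Type*} [DecidableEq U]
    (s : ℕ) (hs : 1 ≤ s) (S : List U) (x : U)
    (i j : ℕ) :
    freq S x j + freq S x (s * (i / s)) ≤ freq S x (s * (j ⌈/⌉ s)) + freq S x i ∧
    freq S x (s * (j ⌈/⌉ s)) + freq S x i ≤
      freq S x j + freq S x (s * (i / s)) + 2 * s := by
  have hi : s * (i / s) ≤ i := Nat.mul_div_le i s
  have hi' : i ≤ s * (i / s) + s := Nat.le_mul_div_add hs i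
  have hj : j ≤ s * (j ⌈/⌉ s) := Nat.le_mul_ceilDiv hs j
  have hj' : s * (j ⌈/⌉ s) ≤ j + s := Nat.mul_ceilDiv_le_add j s
  refine ⟨Nat.add_le_add (freq_monotone S x hj) (freq_monotone S x hi), ?_⟩
  have grow_j := freq_le_freq_add_sub S x j (s * (j ⌈/⌉ s))
  have grow_i := freq_le_freq_add_sub S x (s * (i / s)) i
  omega

/-- Rounding the interval endpoints to multiples of the block size `s` sandwiches
the interval frequency:
`f_x^{s·⌈j/s⌉} − f_x^{s·⌊i/s⌋} − 2s ≤ f_x^{i,j} ≤ f_x^{s·⌈j/s⌉} − f_x^{s·⌊i/s⌋}`,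
stated additively over ℕ. -/
theorem freq_rounded_sandwich {U : Type*} [DecidableEq U]
    (W s : ℕ) (hs : 1 ≤ s) (hsW : s ∣ W) (S : List U) (hS : S.length = W) (x : U)
    (i j : ℕ) (hij : i ≤ j) (hjW : j ≤ W) :
    freq S x j + freq S x (s * (i / s)) ≤ freq S x (s * (j ⌈/⌉ s)) + freq S x i ∧
    freq S x (s * (j ⌈/⌉ s)) + freq S x i ≤
      freq S x j + freq S x (s * (i / s)) + 2 * s :=
  freq_rounded_sandwich_general s hs S x i j
end

section
/- (Correctness of RAW for traffic volumes / weighted streams.) Let s ≥ 1 be a natural number dividing W and let x ∈ U. Suppose that for every ℓ ∈ {0, 1, …, W/s} a real number Â(ℓ) is given satisfying v_x^{ℓ·s} ≤ Â(ℓ) ≤ v_x^{ℓ·s} + s·M. Then for all indices i ≤ j ≤ W, the estimate v := Â(⌈j/s⌉) − Â(⌊i/s⌋) + s·M satisfies v_x^{i,j} ≤ v ≤ v_x^{i,j} + 4·s·M. (With s = Wε/4 the additive error is at most W·M·ε.) -/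
/-- The `w`-volume of `x`: the sum of the weights of the pairs with identifier `x`
among the last `w` elements of the weighted stream `S`. -/
def vol {U : Type*} [DecidableEq U] (S : List (U × ℕ)) (x : U) (w : ℕ) : ℕ :=
  ((((S.drop (S.length - w)).filter (fun p => p.1 = x))).map Prod.snd).sum

/-!
Write `a = ⌊i/s⌋·s` and `b = ⌈j/s⌉·s`, so `a ≤ i ≤ a + s` and `j ≤ b ≤ j + s`. Since a window
of `d` extra elements adds between `0` and `d·M` to a volume, `v_x^a` and `v_x^b` are within
`s·M` of `v_x^i` and `v_x^j`, and the estimates `Â` add at most another `s·M` each. The extra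
`s·M` in the estimator offsets the possible overestimate of `Â(⌊i/s⌋)`, which makes it one-sided.
-/

section Volume

variable {U : Type*} [DecidableEq U]

def weightOf (x : U) (T : List (U × ℕ)) : ℕ :=
  ((T.filter (fun p => p.1 = x)).map Prod.snd).sum

theorem weightOf_append (x : U) (T₁ T₂ : List (U × ℕ)) :
    weightOf x (T₁ ++ T₂) = weightOf x T₁ + weightOf x T₂ := by
  simp only [weightOf, List.filter_append, List.map_append, List.sum_append]

theorem weightOf_le_length_mul (x : U) {T : List (U × ℕ)} {M : ℕ} (hT : ∀ p ∈ T, p.2 ≤ M) :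
    weightOf x T ≤ T.length * M := by
  have hbound : ∀ y ∈ (T.filter (fun p => p.1 = x)).map Prod.snd, y ≤ M := by
    simp only [List.mem_map, List.mem_filter]
    rintro _ ⟨p, ⟨hp, -⟩, rfl⟩
    exact hT p hp
  calc weightOf x T ≤ ((T.filter (fun p => p.1 = x)).map Prod.snd).length * M := by
        rw [weightOf, ← smul_eq_mul]
        exact List.sum_le_card_nsmul _ M hbound
    _ ≤ T.length * M := by
        gcongr
        simpa only [List.length_map] using List.length_filter_le _ _

variable (S : List (U × ℕ)) (x : U)

theorem vol_eq_weightOf_drop (w : ℕ) : vol S x w = weightOf x (S.drop (S.length - w)) := rfl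

theorem exists_vol_eq_weightOf_add_vol {w₁ w₂ : ℕ} (h : w₁ ≤ w₂) :
    ∃ T : List (U × ℕ), T.length ≤ w₂ - w₁ ∧ (∀ p ∈ T, p ∈ S) ∧
      vol S x w₂ = weightOf x T + vol S x w₁ := by
  set k := (S.length - w₁) - (S.length - w₂)
  refine ⟨(S.drop (S.length - w₂)).take k, ?_, fun p hp ↦ ?_, ?_⟩
  · exact (List.length_take_le _ _).trans (by omega)
  · exact List.mem_of_mem_drop (List.mem_of_mem_take hp)
  · have hdrop : (S.drop (S.length - w₂)).drop k = S.drop (S.length - w₁) := by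
      rw [List.drop_drop]
      congr 1
      omega
    rw [vol_eq_weightOf_drop, vol_eq_weightOf_drop, ← weightOf_append, ← hdrop,
      List.take_append_drop]

theorem vol_mono : Monotone (vol S x) := fun _ _ h ↦ by
  obtain ⟨T, -, -, hT⟩ := exists_vol_eq_weightOf_add_vol S x h
  omega

theorem vol_le_vol_add_mul {M : ℕ} (hw : ∀ p ∈ S, p.2 ≤ M) {w₁ w₂ : ℕ} (h : w₁ ≤ w₂) :
    vol S x w₂ ≤ vol S x w₁ + (w₂ - w₁) * M := by
  obtain ⟨T, hlen, hTS, hT⟩ := exists_vol_eq_weightOf_add_vol S x h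
  have hweight : weightOf x T ≤ T.length * M :=
    weightOf_le_length_mul x fun p hp ↦ hw p (hTS p hp)
  have : T.length * M ≤ (w₂ - w₁) * M := Nat.mul_le_mul_right M hlen
  omega

theorem cast_vol_mem_Icc {M s : ℕ} (hw : ∀ p ∈ S, p.2 ≤ M) {w₁ w₂ : ℕ} (h₁ : w₁ ≤ w₂)
    (h₂ : w₂ ≤ w₁ + s) :
    (vol S x w₂ : ℝ) ∈ Set.Icc (vol S x w₁ : ℝ) (vol S x w₁ + s * M) := by
  have hupper : vol S x w₂ ≤ vol S x w₁ + s * M :=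
    (vol_le_vol_add_mul S x hw h₁).trans (by gcongr; omega)
  exact ⟨by exact_mod_cast vol_mono S x h₁, by exact_mod_cast hupper⟩

end Volume

theorem ceilDiv_mul_le_add (j : ℕ) {s : ℕ} (hs : 0 < s) : j ⌈/⌉ s * s ≤ j + s := by
  have := Nat.div_mul_le_self (j + s - 1) s
  rw [Nat.ceilDiv_eq_add_pred_div]
  omega

theorem le_ceilDiv_mul (j : ℕ) {s : ℕ} (hs : 0 < s) : j ≤ j ⌈/⌉ s * s := by
  simpa only [smul_eq_mul, mul_comm] using le_smul_ceilDiv (b := j) hs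

theorem ceilDiv_le_div_of_dvd {s W j : ℕ} (hs : 0 < s) (hsW : s ∣ W) (hjW : j ≤ W) :
    j ⌈/⌉ s ≤ W / s := by
  rw [ceilDiv_le_iff_le_mul hs, Nat.mul_div_cancel' hsW]
  exact hjW

theorem raw_volume_correctness_general {U : Type*} [DecidableEq U]
    (W M s : ℕ) (hs : 1 ≤ s) (hsW : s ∣ W) (S : List (U × ℕ))
    (hw : ∀ p ∈ S, 1 ≤ p.2 ∧ p.2 ≤ M) (x : U)
    (A : ℕ → ℝ)
    (hA : ∀ ℓ ≤ W / s, (vol S x (ℓ * s) : ℝ) ≤ A ℓ ∧ A ℓ ≤ vol S x (ℓ * s) + s * M)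
    (i j : ℕ) (hij : i ≤ j) (hjW : j ≤ W) :
    ((vol S x j : ℝ) - vol S x i) ≤ A (j ⌈/⌉ s) - A (i / s) + s * M ∧
      A (j ⌈/⌉ s) - A (i / s) + s * M ≤ ((vol S x j : ℝ) - vol S x i) + 4 * (s * M) := by
  have hwM : ∀ p ∈ S, p.2 ≤ M := fun p hp ↦ (hw p hp).2
  obtain ⟨hAj, hAj'⟩ := hA (j ⌈/⌉ s) (ceilDiv_le_div_of_dvd hs hsW hjW)
  obtain ⟨hAi, hAi'⟩ := hA (i / s) (Nat.div_le_div_right (hij.trans hjW))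
  obtain ⟨hj, hj'⟩ := cast_vol_mem_Icc S x hwM (le_ceilDiv_mul j hs) (ceilDiv_mul_le_add j hs)
  obtain ⟨hi, hi'⟩ := cast_vol_mem_Icc S x hwM (Nat.div_mul_le_self i s)
    (Nat.lt_div_mul_add (a := i) hs).le
  constructor <;> linarith

/-- Correctness of RAW for traffic volumes: if for every `ℓ ≤ W/s` the black-box
estimate `A ℓ` satisfies `v_x^{ℓ·s} ≤ A ℓ ≤ v_x^{ℓ·s} + s·M`, then for all
`i ≤ j ≤ W` the estimate `A(⌈j/s⌉) − A(⌊i/s⌋) + s·M` approximates `v_x^{i,j}`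
with additive error at most `4·s·M` and never underestimates. -/
theorem raw_volume_correctness {U : Type*} [DecidableEq U]
    (W M s : ℕ) (hs : 1 ≤ s) (hsW : s ∣ W) (S : List (U × ℕ)) (hS : S.length = W)
    (hw : ∀ p ∈ S, 1 ≤ p.2 ∧ p.2 ≤ M) (x : U)
    (A : ℕ → ℝ)
    (hA : ∀ ℓ ≤ W / s, (vol S x (ℓ * s) : ℝ) ≤ A ℓ ∧ A ℓ ≤ vol S x (ℓ * s) + s * M)
    (i j : ℕ) (hij : i ≤ j) (hjW : j ≤ W) :
    ((vol S x j : ℝ) - vol S x i) ≤ A (j ⌈/⌉ s) - A (i / s) + s * M ∧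
      A (j ⌈/⌉ s) - A (i / s) + s * M ≤ ((vol S x j : ℝ) - vol S x i) + 4 * (s * M) :=
  raw_volume_correctness_general W M s hs hsW S hw x A hA i j hij hjW
end

section
/- (Correctness of the HIT table-merging recursion.) Let g : ℕ → ℕ and define T : ℕ → ℕ → ℕ recursively by T 0 i = g i and T (ℓ+1) i = T ℓ i + T ℓ (i − 2^ℓ) (truncated natural subtraction). Then for every level ℓ and every block index i with 2^ℓ ≤ i, T ℓ i = Σ_{m = i − 2^ℓ + 1}^{i} g m, i.e., the level-ℓ table at index i stores exactly the total count over the 2^ℓ consecutive blocks i − 2^ℓ + 1, …, i. -/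
/-- Correctness of the HIT table-merging recursion: if `T 0 i = g i` and
`T (ℓ+1) i = T ℓ i + T ℓ (i − 2^ℓ)`, then for `2^ℓ ≤ i` the level-`ℓ` table at
index `i` stores exactly the total count over blocks `i − 2^ℓ + 1, …, i`. -/
theorem hit_table_correctness (g : ℕ → ℕ) (T : ℕ → ℕ → ℕ)
    (hT0 : ∀ i, T 0 i = g i)
    (hTs : ∀ ℓ i, T (ℓ + 1) i = T ℓ i + T ℓ (i - 2 ^ ℓ)) :
    ∀ ℓ i, 2 ^ ℓ ≤ i → T ℓ i = ∑ m ∈ Finset.Icc (i - 2 ^ ℓ + 1) i, g m := by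
  intro ℓ
  induction ℓ with
  | zero =>
    intro i hi
    simp only [pow_zero] at hi ⊢
    rw [hT0]
    have : i - 1 + 1 = i := Nat.succ_pred_eq_of_pos hi
    rw [this, Finset.Icc_self, Finset.sum_singleton]
  | succ ℓ ih =>
    intro i hi
    have h1 : 1 ≤ 2 ^ ℓ := Nat.one_le_two_pow
    have h2 : (2 : ℕ) ^ (ℓ + 1) = 2 ^ ℓ + 2 ^ ℓ := by ring
    have hℓi : 2 ^ ℓ ≤ i := by omega
    have hℓi' : 2 ^ ℓ ≤ i - 2 ^ ℓ := by omega
    rw [hTs, ih i hℓi, ih _ hℓi']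
    rw [show i - 2 ^ ℓ + 1 = (i - 2 ^ ℓ) + 1 from rfl]
    rw [Finset.Icc_add_one_left_eq_Ioc, Finset.Icc_add_one_left_eq_Ioc, Finset.Icc_add_one_left_eq_Ioc]
    have e1 : i - 2 ^ ℓ - 2 ^ ℓ = i - 2 ^ (ℓ + 1) := by omega
    have l1 : i - 2 ^ (ℓ + 1) ≤ i - 2 ^ ℓ := by omega
    have l2 : i - 2 ^ ℓ ≤ i := by omega
    rw [e1, add_comm]
    exact Finset.sum_Ioc_consecutive _ l1 l2
end

section
/- (Counting core of HIT's space bound.) Let U be a type, let A be a finite set of pairs (m, x) with m a positive integer and x ∈ U (an appearance of element x in block m), and let L ∈ ℕ. Then the number of triples (ℓ, i, x) such that 0 ≤ ℓ ≤ L, i is a positive integer with 2^ℓ ∣ i, and there exists m with (m, x) ∈ A and i − 2^ℓ < m ≤ i, is at most (L + 1) · |A|. (Each appearance of an element is reflected in at most one table per level, hence the total number of table entries is at most (L+1)·N for N appearances.) -/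
/-!
At each level `ℓ`, block `m` is covered by exactly one table: the one at the least multiple of
`2 ^ ℓ` that is `≥ m`, namely `2 ^ ℓ * ((m - 1) / 2 ^ ℓ + 1)`. So the table entries are the image
of `{0, …, L} × A` under `(ℓ, (m, x)) ↦ (ℓ, 2 ^ ℓ * ((m - 1) / 2 ^ ℓ + 1), x)`.
-/

theorem Nat.eq_mul_pred_div_add_one_of_dvd {d i m : ℕ} (hd : d ∣ i)
    (hlo : i - d < m) (hhi : m ≤ i) :
    i = d * ((m - 1) / d + 1) := by
  obtain ⟨_ | k, rfl⟩ := hd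
  · omega
  · have hk : (m - 1) / d = k := by
      rw [mul_add_one] at hlo hhi
      apply Nat.div_eq_of_lt_le <;> rw [mul_comm] <;> grind
    rw [hk]

theorem Set.finite_and_ncard_le_of_subset_image {α β : Type*} {S : Set β} (s : Finset α)
    (f : α → β) (h : S ⊆ f '' s) : S.Finite ∧ S.ncard ≤ s.card :=
  ⟨(s.finite_toSet.image f).subset h,
    (Set.ncard_le_ncard h (s.finite_toSet.image f)).trans
      ((Set.ncard_image_le s.finite_toSet).trans (Set.ncard_coe_finset s).le)⟩

theorem hit_space_bound_general {U : Type*} (A : Finset (ℕ × U))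
    (L : ℕ) :
    ({t : ℕ × ℕ × U | t.1 ≤ L ∧ 0 < t.2.1 ∧ 2 ^ t.1 ∣ t.2.1 ∧
        ∃ m, (m, t.2.2) ∈ A ∧ t.2.1 - 2 ^ t.1 < m ∧ m ≤ t.2.1}).Finite ∧
    ({t : ℕ × ℕ × U | t.1 ≤ L ∧ 0 < t.2.1 ∧ 2 ^ t.1 ∣ t.2.1 ∧
        ∃ m, (m, t.2.2) ∈ A ∧ t.2.1 - 2 ^ t.1 < m ∧ m ≤ t.2.1}).ncard ≤
      (L + 1) * A.card := by
  rw [← Finset.card_range (L + 1), ← Finset.card_product]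
  refine Set.finite_and_ncard_le_of_subset_image _
    (fun p => (p.1, 2 ^ p.1 * ((p.2.1 - 1) / 2 ^ p.1 + 1), p.2.2)) ?_
  rintro ⟨ℓ, i, x⟩ ⟨hℓ, -, hdvd, m, hmA, hlo, hhi⟩
  refine ⟨(ℓ, m, x), by simpa [Nat.lt_succ_iff] using ⟨hℓ, hmA⟩, ?_⟩
  simp [← Nat.eq_mul_pred_div_add_one_of_dvd hdvd hlo hhi]

/-- Counting core of HIT's space bound: given an appearance set `A` of pairs
`(m, x)` with `m` a positive block index, the set of table entries — triples
`(ℓ, i, x)` with `ℓ ≤ L`, `i` positive, `2^ℓ ∣ i`, and `x` appearing in some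
block `m` with `i − 2^ℓ < m ≤ i` — is finite of size at most `(L + 1)·|A|`. -/
theorem hit_space_bound {U : Type*} (A : Finset (ℕ × U)) (hA : ∀ p ∈ A, 0 < p.1)
    (L : ℕ) :
    ({t : ℕ × ℕ × U | t.1 ≤ L ∧ 0 < t.2.1 ∧ 2 ^ t.1 ∣ t.2.1 ∧
        ∃ m, (m, t.2.2) ∈ A ∧ t.2.1 - 2 ^ t.1 < m ∧ m ≤ t.2.1}).Finite ∧
    ({t : ℕ × ℕ × U | t.1 ≤ L ∧ 0 < t.2.1 ∧ 2 ^ t.1 ∣ t.2.1 ∧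
        ∃ m, (m, t.2.2) ∈ A ∧ t.2.1 - 2 ^ t.1 < m ∧ m ≤ t.2.1}).ncard ≤
      (L + 1) * A.card :=
  hit_space_bound_general A L
end

section
/- (HIT query decomposition takes at most 2·log steps.) For all natural numbers a < b, there exist a natural number m with 1 ≤ m ≤ 2·(⌊log₂(b − a)⌋ + 1), levels ℓ₁, …, ℓ_m ∈ ℕ, and a strictly decreasing sequence b = p₀ > p₁ > ⋯ > p_m = a such that for every t ∈ {1, …, m}: p_{t−1} − p_t = 2^{ℓ_t} and 2^{ℓ_t} divides p_{t−1}. (Thus the interval of blocks (a, b] can be partitioned into at most 2(⌊log₂(b−a)⌋+1) dyadic-aligned pieces (p_t, p_{t−1}], each covered by a single HIT table.) -/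
/-! Let `d = ⌊log₂ (b - a)⌋` and let `c` be the largest multiple of `2^d` not exceeding `b`.
Then `a < c ≤ b`, and both gaps `c - a` and `b - c` are below `2^(d+1)`. Starting from an
endpoint divisible by `2^k`, a gap below `2^(k+1)` is covered greedily by aligned pieces of
sizes `2^k, 2^(k-1), …, 1`, at most one of each (the binary digits of the gap), so each side
of `c` needs at most `d + 1` pieces. -/

/-- `(a, b]` is the union of `m` consecutive intervals `(c, c + 2^ℓ]` with `2^ℓ ∣ c`,
i.e. of ranges of single HIT tables. -/
inductive DyadicCover (a : ℕ) : ℕ → ℕ → Prop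
  | refl : DyadicCover a a 0
  | cons {c m : ℕ} (ℓ : ℕ) : DyadicCover a c m → 2 ^ ℓ ∣ c → DyadicCover a (c + 2 ^ ℓ) (m + 1)

namespace DyadicCover

variable {a b c m m₁ m₂ ℓ : ℕ}

theorem single (hc : 2 ^ ℓ ∣ c) : DyadicCover c (c + 2 ^ ℓ) 1 :=
  refl.cons ℓ hc

theorem trans (h₁ : DyadicCover a c m₁) (h₂ : DyadicCover c b m₂) :
    DyadicCover a b (m₁ + m₂) := by
  induction h₂ with
  | refl => exact h₁
  | cons ℓ _ hd ih => exact ih.cons ℓ hd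

theorem pos_of_lt (h : DyadicCover a b m) (hab : a < b) : 0 < m := by
  cases h with
  | refl => exact absurd hab (lt_irrefl a)
  | cons => exact Nat.succ_pos _

theorem exists_seq (h : DyadicCover a b m) :
    ∃ p L : ℕ → ℕ, p 0 = b ∧ p m = a ∧ (∀ t < m, p (t + 1) < p t) ∧
      ∀ t, 1 ≤ t → t ≤ m → p (t - 1) - p t = 2 ^ L t ∧ 2 ^ L t ∣ p (t - 1) := by
  induction h with
  | refl => exact ⟨fun _ => a, fun _ => 0, rfl, rfl, by omega, by omega⟩
  | @cons c _ ℓ _ hc ih =>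
    obtain ⟨p, L, hp0, hpm, hanti, hstep⟩ := ih
    refine ⟨fun | 0 => c + 2 ^ ℓ | t + 1 => p t,
      fun | 0 => 0 | 1 => ℓ | t + 2 => L (t + 1), rfl, hpm, ?_, ?_⟩
    · rintro (_ | t) ht
      · simp only [hp0]
        exact Nat.lt_add_of_pos_right (Nat.two_pow_pos ℓ)
      · exact hanti t (by omega)
    · rintro (_ | _ | t) h₁ h₂
      · omega
      · simp only [hp0]
        exact ⟨Nat.add_sub_cancel_left _ _, Nat.dvd_add_self_right.mpr hc⟩
      · exact hstep (t + 1) (by omega) (by omega)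

end DyadicCover

theorem exists_dyadicCover_of_sub_lt_two {a b : ℕ} (hab : a ≤ b) (h : b - a < 2) :
    ∃ m ≤ 1, DyadicCover a b m := by
  obtain rfl | rfl : b = a ∨ b = a + 2 ^ 0 := by omega
  · exact ⟨0, zero_le_one, .refl⟩
  · exact ⟨1, le_rfl, .single (one_dvd a)⟩

theorem exists_dyadicCover_of_pow_dvd_right (k : ℕ) {a b : ℕ} (hb : 2 ^ k ∣ b) (hab : a ≤ b)
    (h : b - a < 2 ^ (k + 1)) : ∃ m ≤ k + 1, DyadicCover a b m := by
  induction k generalizing b with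
  | zero => exact exists_dyadicCover_of_sub_lt_two hab h
  | succ k ih =>
    have hb' : 2 ^ k ∣ b := (pow_dvd_pow 2 k.le_succ).trans hb
    by_cases hsmall : b - a < 2 ^ (k + 1)
    · obtain ⟨m, hm, hcover⟩ := ih hb' hab hsmall
      exact ⟨m, by omega, hcover⟩
    · have := pow_succ 2 (k + 1)
      obtain ⟨m, hm, hcover⟩ := ih (b := b - 2 ^ (k + 1))
        (Nat.dvd_sub hb' (pow_dvd_pow 2 k.le_succ)) (by omega) (by omega)
      have hc : 2 ^ (k + 1) ∣ b - 2 ^ (k + 1) := Nat.dvd_sub hb dvd_rfl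
      refine ⟨m + 1, by omega, ?_⟩
      simpa only [Nat.sub_add_cancel (by omega : 2 ^ (k + 1) ≤ b)] using hcover.cons (k + 1) hc

theorem exists_dyadicCover_of_pow_dvd_left (k : ℕ) {a b : ℕ} (ha : 2 ^ k ∣ a) (hab : a ≤ b)
    (h : b - a < 2 ^ (k + 1)) : ∃ m ≤ k + 1, DyadicCover a b m := by
  induction k generalizing a with
  | zero => exact exists_dyadicCover_of_sub_lt_two hab h
  | succ k ih =>
    have ha' : 2 ^ k ∣ a := (pow_dvd_pow 2 k.le_succ).trans ha
    by_cases hsmall : b - a < 2 ^ (k + 1)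
    · obtain ⟨m, hm, hcover⟩ := ih ha' hab hsmall
      exact ⟨m, by omega, hcover⟩
    · have := pow_succ 2 (k + 1)
      obtain ⟨m, hm, hcover⟩ := ih (a := a + 2 ^ (k + 1))
        (Nat.dvd_add ha' (pow_dvd_pow 2 k.le_succ)) (by omega) (by omega)
      exact ⟨1 + m, by omega, (DyadicCover.single ha).trans hcover⟩

/-- HIT query decomposition takes at most `2·(⌊log₂(b−a)⌋+1)` steps: the block
interval `(a, b]` can be partitioned into `m ≤ 2·(⌊log₂(b−a)⌋+1)` dyadic-aligned
pieces `(p_t, p_{t−1}]`, each of length `2^{ℓ_t}` with `2^{ℓ_t} ∣ p_{t−1}`. -/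
theorem hit_query_decomposition (a b : ℕ) (hab : a < b) :
    ∃ m : ℕ, 1 ≤ m ∧ m ≤ 2 * (Nat.log 2 (b - a) + 1) ∧
      ∃ p : ℕ → ℕ, ∃ L : ℕ → ℕ,
        p 0 = b ∧ p m = a ∧
        (∀ t < m, p (t + 1) < p t) ∧
        (∀ t, 1 ≤ t → t ≤ m →
          p (t - 1) - p t = 2 ^ L t ∧ 2 ^ L t ∣ p (t - 1)) := by
  set d := Nat.log 2 (b - a)
  have hlow : 2 ^ d ≤ b - a := Nat.pow_log_le_self 2 (by omega)
  have hhigh : b - a < 2 ^ (d + 1) := Nat.lt_pow_succ_log_self one_lt_two _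
  set c := b / 2 ^ d * 2 ^ d
  have hmod : b % 2 ^ d + c = b := Nat.mod_add_div' b (2 ^ d)
  have hrem : b % 2 ^ d < 2 ^ d := Nat.mod_lt b (Nat.two_pow_pos d)
  have hd : 2 ^ d ∣ c := dvd_mul_left _ _
  obtain ⟨m₁, hm₁, hlower⟩ := exists_dyadicCover_of_pow_dvd_right d hd (a := a) (by omega) (by omega)
  obtain ⟨m₂, hm₂, hupper⟩ := exists_dyadicCover_of_pow_dvd_left d hd (b := b) (by omega)
    (by rw [pow_succ]; omega)
  have hcover := hlower.trans hupper
  exact ⟨m₁ + m₂, hcover.pos_of_lt hab, by omega, hcover.exists_seq⟩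
end

section
/- (Counting core of ACC_k's space bound.) Let U be a type, let n, d, k be natural numbers with d ≥ 1 and k ≥ 1, and let A be a finite set of pairs (m, x) with 1 ≤ m ≤ n and x ∈ U (an appearance of element x in block m). Then the number of triples (ℓ, i, x) such that 0 ≤ ℓ ≤ k − 1, 1 ≤ i ≤ n, d^ℓ ∣ i, and there exists m with (m, x) ∈ A and d^{ℓ+1}·⌊(i−1)/d^{ℓ+1}⌋ < m ≤ i, is at most k · d · |A|. (Each appearance can create entries in at most d tables of each of the k levels, so the total number of table entries is at most k·d·N for N appearances.) -/
private lemma acc_key (d l m : ℕ) (hd : 1 ≤ d) :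
    ∀ i, 1 ≤ i → d ^ l ∣ i → d ^ (l + 1) * ((i - 1) / d ^ (l + 1)) < m → m ≤ i →
    ∀ i', 1 ≤ i' → d ^ l ∣ i' → d ^ (l + 1) * ((i' - 1) / d ^ (l + 1)) < m → m ≤ i' →
    (i / d ^ l) % d = (i' / d ^ l) % d → i = i' := by
  have hD : 0 < d ^ (l + 1) := pow_pos hd _
  -- main claim: each valid i lies in a fixed interval determined by m
  have hq : ∀ i, 1 ≤ i → d ^ (l + 1) * ((i - 1) / d ^ (l + 1)) < m → m ≤ i →
      (i - 1) / d ^ (l + 1) = (m - 1) / d ^ (l + 1) := by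
    intro i hi1 hlt hle
    have h1 : (i - 1) / d ^ (l + 1) ≤ (m - 1) / d ^ (l + 1) :=
      (Nat.le_div_iff_mul_le hD).mpr (by rw [mul_comm]; omega)
    have h2 : (m - 1) / d ^ (l + 1) ≤ (i - 1) / d ^ (l + 1) :=
      Nat.div_le_div_right (by omega)
    omega
  intro i hi1 hdvd hlt hle i' hi1' hdvd' hlt' hle' hr
  -- both i, i' within d^(l+1) of each other
  have hb : ∀ j, 1 ≤ j → d ^ (l + 1) * ((j - 1) / d ^ (l + 1)) < m → m ≤ j →
      d ^ (l + 1) * ((m - 1) / d ^ (l + 1)) < j ∧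
        j ≤ d ^ (l + 1) * ((m - 1) / d ^ (l + 1)) + d ^ (l + 1) := by
    intro j hj1 hlt hle
    have hqj := hq j hj1 hlt hle
    have hqj' : d ^ (l + 1) * ((j - 1) / d ^ (l + 1)) =
        d ^ (l + 1) * ((m - 1) / d ^ (l + 1)) := by rw [hqj]
    have h1 := Nat.div_add_mod (j - 1) (d ^ (l + 1))
    have h2 := Nat.mod_lt (j - 1) hD
    omega
  have hbi := hb i hi1 hlt hle
  have hbi' := hb i' hi1' hlt' hle'
  have hclose : i ≤ i' → i' - i < d ^ (l + 1) := by omega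
  have hclose' : i' ≤ i → i - i' < d ^ (l + 1) := by omega
  -- divisibility by d^(l+1) of the difference
  have hmod : i ≡ i' [MOD d ^ l * d] := by
    have : d ^ l * (i / d ^ l) ≡ d ^ l * (i' / d ^ l) [MOD d ^ l * d] :=
      Nat.ModEq.mul_left' (d ^ l) hr
    rwa [Nat.mul_div_cancel' hdvd, Nat.mul_div_cancel' hdvd'] at this
  rw [← pow_succ] at hmod
  rcases le_total i i' with h | h
  · have hdvd2 : d ^ (l + 1) ∣ i' - i := (Nat.modEq_iff_dvd' h).mp hmod
    rcases Nat.eq_zero_or_pos (i' - i) with h0 | h0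
    · omega
    · have := Nat.le_of_dvd h0 hdvd2; have := hclose h; omega
  · have hdvd2 : d ^ (l + 1) ∣ i - i' := (Nat.modEq_iff_dvd' h).mp hmod.symm
    rcases Nat.eq_zero_or_pos (i - i') with h0 | h0
    · omega
    · have := Nat.le_of_dvd h0 hdvd2; have := hclose' h; omega

/-- Counting core of ACC_k's space bound: given an appearance set `A` of pairs
`(m, x)` with `1 ≤ m ≤ n`, the set of table entries — triples `(ℓ, i, x)` with
`ℓ < k`, `1 ≤ i ≤ n`, `d^ℓ ∣ i`, and `x` appearing in some block `m` with
`d^{ℓ+1}·⌊(i−1)/d^{ℓ+1}⌋ < m ≤ i` — is finite of size at most `k·d·|A|`. -/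
theorem acc_space_bound {U : Type*} (n d k : ℕ) (hd : 1 ≤ d) (hk : 1 ≤ k)
    (A : Finset (ℕ × U)) (hA : ∀ p ∈ A, 1 ≤ p.1 ∧ p.1 ≤ n) :
    ({t : ℕ × ℕ × U | t.1 < k ∧ 1 ≤ t.2.1 ∧ t.2.1 ≤ n ∧ d ^ t.1 ∣ t.2.1 ∧
        ∃ m, (m, t.2.2) ∈ A ∧
          d ^ (t.1 + 1) * ((t.2.1 - 1) / d ^ (t.1 + 1)) < m ∧ m ≤ t.2.1}).Finite ∧
    ({t : ℕ × ℕ × U | t.1 < k ∧ 1 ≤ t.2.1 ∧ t.2.1 ≤ n ∧ d ^ t.1 ∣ t.2.1 ∧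
        ∃ m, (m, t.2.2) ∈ A ∧
          d ^ (t.1 + 1) * ((t.2.1 - 1) / d ^ (t.1 + 1)) < m ∧ m ≤ t.2.1}).ncard ≤
      k * d * A.card := by
  classical
  set S : Set (ℕ × ℕ × U) :=
    {t : ℕ × ℕ × U | t.1 < k ∧ 1 ≤ t.2.1 ∧ t.2.1 ≤ n ∧ d ^ t.1 ∣ t.2.1 ∧
        ∃ m, (m, t.2.2) ∈ A ∧
          d ^ (t.1 + 1) * ((t.2.1 - 1) / d ^ (t.1 + 1)) < m ∧ m ≤ t.2.1} with hS
  set T : Finset (ℕ × ℕ × (ℕ × U)) := (Finset.range k) ×ˢ (Finset.range d) ×ˢ A with hT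
  have hg : ∀ t : S, ((t : ℕ × ℕ × U).1, ((t : ℕ × ℕ × U).2.1 / d ^ (t : ℕ × ℕ × U).1) % d,
      (t.2.2.2.2.2.choose, (t : ℕ × ℕ × U).2.2)) ∈ T := by
    rintro ⟨⟨l, i, x⟩, h⟩
    obtain ⟨h1, h2, h3, h4, hex⟩ := h
    simp only [hT, Finset.mem_product, Finset.mem_range]
    exact ⟨h1, Nat.mod_lt _ hd, hex.choose_spec.1⟩
  let g : S → T := fun t => ⟨_, hg t⟩
  have hginj : Function.Injective g := by
    rintro ⟨⟨l, i, x⟩, h⟩ ⟨⟨l', i', x'⟩, h'⟩ heq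
    simp only [g, Subtype.mk.injEq, Prod.mk.injEq] at heq
    obtain ⟨hl, hres, hm, hx⟩ := heq
    subst hl; subst hx
    obtain ⟨h1, h2, h3, h4, hex⟩ := h
    obtain ⟨h1', h2', h3', h4', hex'⟩ := h'
    have hs := hex.choose_spec
    have hs' := hex'.choose_spec
    rw [← hm] at hs'
    have : i = i' :=
      acc_key d l hex.choose hd i h2 h4 hs.2.1 hs.2.2 i' h2' h4' hs'.2.1 hs'.2.2 hres
    simp [this]
  have hfinS : S.Finite := by
    rw [← Set.finite_coe_iff]
    exact Finite.of_injective g hginj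
  refine ⟨hfinS, ?_⟩
  have h1 : S.ncard = Nat.card S := (Nat.card_coe_set_eq S).symm
  have h2 : Nat.card S ≤ Nat.card T := Nat.card_le_card_of_injective g hginj
  have h3 : Nat.card T = T.card := Nat.card_eq_finsetCard T
  have h4 : T.card = k * (d * A.card) := by
    simp [hT, Finset.card_product]
  rw [h1, mul_assoc]
  omega
end
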